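/- Let r ≥ 1, m ≥ 2, and for 1 ≤ i, j ≤ m let P_{ji} : ℤ^r → ℂ, with symbol matrix P(ξ) = (P_{ji}(ξ)) ∈ ℂ^{m×m}. Assume: (a) there is a finite set F₀ ⊆ ℤ^r such that for all ξ ∈ ℤ^r \ F₀ and all 1 ≤ ℓ ≤ m, |P_{ℓℓ}(ξ)| > Σ_{i≠ℓ} |P_{ℓi}(ξ)| and |P_{ℓℓ}(ξ)| > Σ_{j≠ℓ} |P_{jℓ}(ξ)| (diagonal dominance by rows and columns); (b) there exist τ₁, …, τ_m ∈ ℝ and C' > 0 such that |P_{ℓi}(ξ)| ≤ C'(1+‖ξ‖²)^{τ_ℓ/2} and |P_{iℓ}(ξ)| ≤ C'(1+‖ξ‖²)^{τ_ℓ/2} for all ξ ∈ ℤ^r, all ℓ, and all i ≠ ℓ; (c) there exist C₁, …, C_m > 0, k₁, …, k_m ∈ ℝ with k_ℓ > τ_ℓ for each ℓ, and a finite set F₁ ⊆ ℤ^r, such that |P_{ℓℓ}(ξ)| ≥ C_ℓ(1+‖ξ‖²)^{k_ℓ/2} for all ξ ∈ ℤ^r \ F₁ and all ℓ. Then there exist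 C > 0, k ∈ ℝ and a finite set F ⊆ ℤ^r such that λ_min(P(ξ)) ≥ C(1+‖ξ‖²)^{k/2} for all ξ ∈ ℤ^r \ F; indeed one may take k = min{k₁, …, k_m} and C = (1/2)·min{C₁, …, C_m}. -/

import Mathlib

/-! Johnson's bound: for a square matrix `A` and a unit vector `v`,
`‖A v‖ ≥ ∑ⱼ |vⱼ| |(A v)ⱼ| ≥ ∑ⱼ (|aⱼⱼ| - (Rⱼ + Cⱼ) / 2) |vⱼ|²`, where `Rⱼ`, `Cⱼ` are the off-diagonal
row and column sums: apply the reverse triangle inequality in each row and `2xy ≤ x² + y²` to the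
off-diagonal products `|vⱼ| |vᵢ|`. For the symbol `P(ξ)` these sums are `O((1 + ‖ξ‖²)^(τ_ℓ/2))`,
while `|P_ℓℓ(ξ)| ≥ C_ℓ (1 + ‖ξ‖²)^(k_ℓ/2)` with `k_ℓ > τ_ℓ`; so outside a finite set they are at
most `C_ℓ / 2 (1 + ‖ξ‖²)^(k_ℓ/2)`, and the bound leaves half of the diagonal estimate. -/

noncomputable section

open scoped BigOperators

/-- Euclidean (ℓ²) norm of a complex vector. -/
def l2norm {n : Type*} [Fintype n] (v : n → ℂ) : ℝ :=
  Real.sqrt (∑ i, ‖v i‖ ^ 2)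

/-- Smallest singular value of a complex matrix, characterized as the infimum of
`‖A v‖₂` over unit vectors `v`. -/
def sminVal {m n : Type*} [Fintype m] [Fintype n] (A : Matrix m n ℂ) : ℝ :=
  sInf {x : ℝ | ∃ v : n → ℂ, l2norm v = 1 ∧ x = l2norm (A.mulVec v)}

/-- The weight `1 + ‖ξ‖²` for a frequency `ξ ∈ ℤ^r`. -/
def wt {r : ℕ} (ξ : Fin r → ℤ) : ℝ :=
  1 + ∑ i, ((ξ i : ℝ)) ^ 2

open Finset Filter
open scoped Matrix

lemma le_sminVal {μ ν : Type*} [Fintype μ] [Fintype ν] [Nonempty ν] {A : Matrix μ ν ℂ} {c : ℝ}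
    (h : ∀ v, l2norm v = 1 → c ≤ l2norm (A *ᵥ v)) : c ≤ sminVal A := by
  classical
  obtain ⟨i⟩ := ‹Nonempty ν›
  have hunit : l2norm (Pi.single i 1 : ν → ℂ) = 1 := by
    simp [l2norm, Pi.single_apply, apply_ite]
  exact le_csInf ⟨_, _, hunit, rfl⟩ fun _ ⟨v, hv, hx⟩ => hx ▸ h v hv

section Johnson

variable {μ : Type*} [Fintype μ] [DecidableEq μ]

lemma sum_offDiag_mul_mul_le {a : μ → μ → ℝ} (ha : ∀ j i, 0 ≤ a j i) (x : μ → ℝ) :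
    ∑ j, ∑ i ∈ univ.erase j, a j i * (x j * x i) ≤
      ∑ j, ((∑ i ∈ univ.erase j, a j i) + ∑ i ∈ univ.erase j, a i j) / 2 * x j ^ 2 := by
  have hswap : ∑ j, ∑ i ∈ univ.erase j, a j i * x i ^ 2 =
      ∑ j, (∑ i ∈ univ.erase j, a i j) * x j ^ 2 := by
    rw [sum_comm' (t' := univ) (s' := fun i => univ.erase i)
      (fun j i => by simp only [mem_univ, mem_erase, true_and, and_true, ne_comm])]
    simp only [sum_mul]
  calc ∑ j, ∑ i ∈ univ.erase j, a j i * (x j * x i)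
      ≤ ∑ j, ∑ i ∈ univ.erase j, (a j i * x j ^ 2 + a j i * x i ^ 2) / 2 := by
        gcongr with j _ i _
        nlinarith [mul_nonneg (ha j i) (sq_nonneg (x j - x i))]
    _ = (∑ j, (∑ i ∈ univ.erase j, a j i) * x j ^ 2 +
          ∑ j, ∑ i ∈ univ.erase j, a j i * x i ^ 2) / 2 := by
        rw [← sum_add_distrib, sum_div]
        refine sum_congr rfl fun j _ => ?_
        rw [sum_mul, ← sum_add_distrib, sum_div]
    _ = _ := by
        rw [hswap, ← sum_add_distrib, sum_div]
        exact sum_congr rfl fun j _ => by ring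

lemma norm_diag_mul_sub_le_norm_mulVec (A : Matrix μ μ ℂ) (v : μ → ℂ) (j : μ) :
    ‖A j j‖ * ‖v j‖ - ∑ i ∈ univ.erase j, ‖A j i‖ * ‖v i‖ ≤ ‖(A *ᵥ v) j‖ := by
  have hsplit : (A *ᵥ v) j = A j j * v j + ∑ i ∈ univ.erase j, A j i * v i := by
    rw [Matrix.mulVec, dotProduct, ← add_sum_erase _ _ (mem_univ j)]
  have hoff : ‖∑ i ∈ univ.erase j, A j i * v i‖ ≤ ∑ i ∈ univ.erase j, ‖A j i‖ * ‖v i‖ :=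
    (norm_sum_le _ _).trans_eq (by simp only [norm_mul])
  have := norm_sub_norm_le (A j j * v j) (-∑ i ∈ univ.erase j, A j i * v i)
  rw [sub_neg_eq_add, ← hsplit, norm_neg, norm_mul] at this
  linarith

lemma sum_diag_sub_offDiag_mul_le (A : Matrix μ μ ℂ) (v : μ → ℂ) :
    ∑ j, (‖A j j‖ - ((∑ i ∈ univ.erase j, ‖A j i‖) + ∑ i ∈ univ.erase j, ‖A i j‖) / 2) *
      ‖v j‖ ^ 2 ≤ l2norm v * l2norm (A *ᵥ v) := by
  have hrow : ∀ j, ‖A j j‖ * ‖v j‖ ^ 2 - ∑ i ∈ univ.erase j, ‖A j i‖ * (‖v j‖ * ‖v i‖) ≤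
      ‖v j‖ * ‖(A *ᵥ v) j‖ := fun j => by
    calc _ = ‖v j‖ * (‖A j j‖ * ‖v j‖ - ∑ i ∈ univ.erase j, ‖A j i‖ * ‖v i‖) := by
          rw [mul_sub, mul_sum]
          congr 1 <;> [ring; exact sum_congr rfl fun i _ => by ring]
      _ ≤ _ := mul_le_mul_of_nonneg_left (norm_diag_mul_sub_le_norm_mulVec A v j) (norm_nonneg _)
  have hoff := sum_offDiag_mul_mul_le (fun j i => norm_nonneg (A j i)) (fun j => ‖v j‖)
  calc _ = ∑ j, ‖A j j‖ * ‖v j‖ ^ 2 -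
        ∑ j, ((∑ i ∈ univ.erase j, ‖A j i‖) + ∑ i ∈ univ.erase j, ‖A i j‖) / 2 * ‖v j‖ ^ 2 := by
          simp only [sub_mul, sum_sub_distrib]
    _ ≤ ∑ j, (‖A j j‖ * ‖v j‖ ^ 2 - ∑ i ∈ univ.erase j, ‖A j i‖ * (‖v j‖ * ‖v i‖)) := by
          rw [sum_sub_distrib]; linarith
    _ ≤ ∑ j, ‖v j‖ * ‖(A *ᵥ v) j‖ := sum_le_sum fun j _ => hrow j
    _ ≤ _ := Real.sum_mul_le_sqrt_mul_sqrt _ _ _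

lemma le_sminVal_of_add_half_offDiag_le_diag [Nonempty μ] {A : Matrix μ μ ℂ} {c : ℝ}
    (h : ∀ ℓ, c + ((∑ i ∈ univ.erase ℓ, ‖A ℓ i‖) + ∑ j ∈ univ.erase ℓ, ‖A j ℓ‖) / 2 ≤ ‖A ℓ ℓ‖) :
    c ≤ sminVal A := by
  refine le_sminVal fun v hv => ?_
  have hv2 : ∑ j, ‖v j‖ ^ 2 = 1 := by rwa [l2norm, Real.sqrt_eq_one] at hv
  calc c = ∑ j, c * ‖v j‖ ^ 2 := by rw [← mul_sum, hv2, mul_one]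
    _ ≤ _ := sum_le_sum fun j _ => by gcongr; linarith [h j]
    _ ≤ l2norm v * l2norm (A *ᵥ v) := sum_diag_sub_offDiag_mul_le A v
    _ = _ := by rw [hv, one_mul]

end Johnson

lemma eventually_mul_rpow_le_mul_rpow (a : ℝ) {b s t : ℝ} (hb : 0 < b) (hst : s < t) :
    ∀ᶠ w in atTop, a * w ^ s ≤ b * w ^ t := by
  filter_upwards [(tendsto_rpow_atTop (sub_pos.2 hst)).eventually_ge_atTop (a / b),
    eventually_gt_atTop 0] with w hw hw0
  calc a * w ^ s = b * (a / b) * w ^ s := by field_simp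
    _ ≤ b * w ^ (t - s) * w ^ s := by gcongr
    _ = b * w ^ t := by rw [mul_assoc, ← Real.rpow_add hw0, sub_add_cancel]

lemma one_le_wt {r : ℕ} (ξ : Fin r → ℤ) : 1 ≤ wt ξ :=
  le_add_of_nonneg_right (sum_nonneg fun _ _ => sq_nonneg _)

lemma norm_le_wt {r : ℕ} (ξ : Fin r → ℤ) : ‖ξ‖ ≤ wt ξ := by
  refine (pi_norm_le_iff_of_nonneg (by linarith [one_le_wt ξ])).2 fun i => ?_
  have hsq : ((ξ i : ℝ)) ^ 2 ≤ ∑ j, ((ξ j : ℝ)) ^ 2 :=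
    single_le_sum (fun j _ => sq_nonneg ((ξ j : ℝ))) (mem_univ i)
  have : |(ξ i : ℝ)| ≤ 1 + (ξ i : ℝ) ^ 2 := by
    nlinarith [sq_abs (ξ i : ℝ), sq_nonneg (|(ξ i : ℝ)| - 1)]
  rw [Int.norm_eq_abs]; unfold wt; linarith

lemma tendsto_wt_cofinite_atTop (r : ℕ) : Tendsto (wt (r := r)) cofinite atTop :=
  tendsto_atTop_mono norm_le_wt
    (cocompact_eq_cofinite (Fin r → ℤ) ▸ tendsto_norm_cocompact_atTop)

theorem diag_dominant_smin_lower_bound (r m : ℕ) (hm : 2 ≤ m)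
    (P : Fin m → Fin m → (Fin r → ℤ) → ℂ)
    -- (b) polynomial bounds on the off-diagonal entries
    (τ : Fin m → ℝ) (C' : ℝ)
    (hoff : ∀ ξ, ∀ ℓ i : Fin m, i ≠ ℓ →
      ‖P ℓ i ξ‖ ≤ C' * wt ξ ^ (τ ℓ / 2) ∧ ‖P i ℓ ξ‖ ≤ C' * wt ξ ^ (τ ℓ / 2))
    -- (c) lower bounds with larger exponents on the diagonal entries
    (Cdiag : Fin m → ℝ) (hCdiag : ∀ ℓ, 0 < Cdiag ℓ)
    (k : Fin m → ℝ) (hk : ∀ ℓ, τ ℓ < k ℓ)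
    (F₁ : Set (Fin r → ℤ)) (hF₁ : F₁.Finite)
    (hdiag : ∀ ξ, ξ ∉ F₁ → ∀ ℓ : Fin m, ‖P ℓ ℓ ξ‖ ≥ Cdiag ℓ * wt ξ ^ (k ℓ / 2)) :
    ∃ F : Set (Fin r → ℤ), F.Finite ∧
      ∀ ξ, ξ ∉ F →
        sminVal (Matrix.of fun j i => P j i ξ) ≥
          (Finset.univ.inf' ⟨(⟨0, by omega⟩ : Fin m), Finset.mem_univ _⟩ Cdiag) / 2 *
            wt ξ ^ ((Finset.univ.inf' ⟨(⟨0, by omega⟩ : Fin m), Finset.mem_univ _⟩ k) / 2) := by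
  have : Nonempty (Fin m) := ⟨⟨0, by omega⟩⟩
  have hdominated : ∀ᶠ ξ in cofinite, ∀ ℓ,
      ((m - 1 : ℕ) : ℝ) * C' * wt ξ ^ (τ ℓ / 2) ≤ Cdiag ℓ / 2 * wt ξ ^ (k ℓ / 2) :=
    eventually_all.2 fun ℓ => (tendsto_wt_cofinite_atTop r).eventually
      (eventually_mul_rpow_le_mul_rpow _ (half_pos (hCdiag ℓ)) (by linarith [hk ℓ]))
  refine ⟨_, eventually_cofinite.1 ((hdominated.and hF₁.eventually_cofinite_notMem).mono
    fun ξ ⟨hξdom, hξ⟩ => ?_), fun ξ hξ => not_not.1 hξ⟩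
  refine le_sminVal_of_add_half_offDiag_le_diag fun ℓ => ?_
  have hoffSum : ∀ f : Fin m → ℂ, (∀ i ≠ ℓ, ‖f i‖ ≤ C' * wt ξ ^ (τ ℓ / 2)) →
      ∑ i ∈ univ.erase ℓ, ‖f i‖ ≤ ((m - 1 : ℕ) : ℝ) * C' * wt ξ ^ (τ ℓ / 2) := fun f hf => by
    refine (sum_le_card_nsmul _ _ _ fun i hi => hf i (ne_of_mem_erase hi)).trans_eq ?_
    simp [card_erase_of_mem, mul_assoc]
  have hrow := hoffSum (fun i => P ℓ i ξ) fun i hi => (hoff ξ ℓ i hi).1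
  have hcol := hoffSum (fun j => P j ℓ ξ) fun j hj => (hoff ξ ℓ j hj).2
  have hmin : univ.inf' univ_nonempty Cdiag / 2 * wt ξ ^ (univ.inf' univ_nonempty k / 2) ≤
      Cdiag ℓ / 2 * wt ξ ^ (k ℓ / 2) :=
    mul_le_mul (by gcongr; exact inf'_le _ (mem_univ ℓ))
      (Real.rpow_le_rpow_of_exponent_le (one_le_wt ξ) (by gcongr; exact inf'_le _ (mem_univ ℓ)))
      (Real.rpow_nonneg (zero_le_one.trans (one_le_wt ξ)) _) (half_pos (hCdiag ℓ)).le
  simp only [Matrix.of_apply]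
  linarith [hdiag ξ hξ ℓ, hξdom ℓ]
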